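/- Let f be a completely multiplicative real-valued function which is nonzero on only finitely many primes, and let t ≥ 1 be an integer. Then Σ_{(a,r,s)} [μ(a)² f(a)²/h(a)] · [μ(r) f(r) τ(r) √r/(σ(r) h(r))] · [μ(s) f(s) τ(s) √s/(σ(s) h(s))] · (log(rs))^t = (Σ_{ℓ₁,…,ℓ_t primes} H(ℓ₁⋯ℓ_t)) · ∏_p F(p), where the sum on the left runs over all triples of pairwise coprime positive integers (a, r, s), the sum on the right runs over all t-tuples of primes, and the product runs over all primes. -/

import Mathlib

open Filter Topology

/-- The multiplicative function `h` with `h(p^k) = 1 + 1/p + 1/p² − 4/(p(p+1))` for `k ≥ 1`. -/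
noncomputable def hFun (n : ℕ) : ℝ :=
  ∏ p ∈ n.primeFactors, (1 + 1 / (p : ℝ) + 1 / (p : ℝ) ^ 2 - 4 / ((p : ℝ) * ((p : ℝ) + 1)))

/-- The Euler factor `F(p) = 1 + f(p)²/h(p) − 4 f(p)√p/(h(p)(p+1))`. -/
noncomputable def Ffac (f : ℕ → ℝ) (p : ℕ) : ℝ :=
  1 + f p ^ 2 / hFun p - 4 * f p * Real.sqrt p / (hFun p * ((p : ℝ) + 1))

/-- The multiplicative function `H` with
`H(p^k) = −4 (log p)^k f(p)√p/(h(p)(p+1)F(p))` for `k ≥ 1`. -/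
noncomputable def Hfun (f : ℕ → ℝ) (n : ℕ) : ℝ :=
  n.factorization.prod fun p k =>
    -4 * Real.log p ^ k * f p * Real.sqrt p / (hFun p * ((p : ℝ) + 1) * Ffac f p)

noncomputable def hterm (p : ℕ) : ℝ :=
  1 + 1 / (p : ℝ) + 1 / (p : ℝ) ^ 2 - 4 / ((p : ℝ) * ((p : ℝ) + 1))

lemma hFun_eq (n : ℕ) : hFun n = ∏ p ∈ n.primeFactors, hterm p := rfl

lemma hFun_prime {p : ℕ} (hp : p.Prime) : hFun p = hterm p := by
  rw [hFun_eq, hp.primeFactors, Finset.prod_singleton]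

noncomputable def aFn (f : ℕ → ℝ) (p : ℕ) : ℝ := f p ^ 2 / hterm p

noncomputable def bFn (f : ℕ → ℝ) (p : ℕ) : ℝ :=
  -2 * f p * Real.sqrt p / (((p : ℝ) + 1) * hterm p)

lemma one_lt_hterm {p : ℕ} (hp : p.Prime) : 1 < hterm p := by
  have h2 : (2 : ℝ) ≤ p := by exact_mod_cast hp.two_le
  have h0 : (0 : ℝ) < p := by linarith
  rw [hterm]
  have key : 1 / (p:ℝ) + 1 / (p:ℝ)^2 - 4 / ((p:ℝ)*((p:ℝ)+1)) = ((p:ℝ)-1)^2/((p:ℝ)^2*((p:ℝ)+1)) := by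
    field_simp
    ring
  have hpos : 0 < ((p:ℝ)-1)^2/((p:ℝ)^2*((p:ℝ)+1)) := by
    apply div_pos (by nlinarith) (by positivity)
  linarith [key, hpos]

lemma Ffac_eq {f : ℕ → ℝ} {p : ℕ} (hp : p.Prime) :
    Ffac f p = 1 + aFn f p + 2 * bFn f p := by
  rw [Ffac, hFun_prime hp, aFn, bFn]; ring

lemma Ffac_pos {f : ℕ → ℝ} {p : ℕ} (hp : p.Prime) : 0 < Ffac f p := by
  have h2 : (2 : ℝ) ≤ p := by exact_mod_cast hp.two_le
  have hh := one_lt_hterm hp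
  have hh0 : 0 < hterm p := by linarith
  have hs : Real.sqrt p ^ 2 = p := Real.sq_sqrt (by linarith)
  have hs0 : 0 ≤ Real.sqrt p := Real.sqrt_nonneg _
  have h1 : (0:ℝ) < (p:ℝ) + 1 := by linarith
  have key : Ffac f p = (hterm p * ((p:ℝ)+1) + f p^2*((p:ℝ)+1) - 4*f p*Real.sqrt p) / (((p:ℝ)+1)*hterm p) := by
    rw [Ffac_eq hp, aFn, bFn]
    field_simp
    ring
  rw [key]
  apply div_pos _ (by positivity)
  nlinarith [sq_nonneg (f p*((p:ℝ)+1) - 2*Real.sqrt (p:ℝ)), hs, hh, h2, sq_nonneg ((p:ℝ)-1)]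

lemma sqrt_prod' {ι : Type*} (s : Finset ι) (g : ι → ℝ) (hg : ∀ i ∈ s, 0 ≤ g i) :
    Real.sqrt (∏ i ∈ s, g i) = ∏ i ∈ s, Real.sqrt (g i) := by
  classical
  induction s using Finset.cons_induction with
  | empty => simp
  | cons a s ha ih =>
    rw [Finset.prod_cons, Finset.prod_cons, Real.sqrt_mul (hg a (Finset.mem_cons_self a s)),
      ih (fun i hi => hg i (Finset.mem_cons_of_mem hi))]

lemma f_prod {f : ℕ → ℝ} (hf1 : f 1 = 1) (hfmul : ∀ m n : ℕ, f (m * n) = f m * f n)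
    {ι : Type*} (s : Finset ι) (g : ι → ℕ) :
    f (∏ i ∈ s, g i) = ∏ i ∈ s, f (g i) := by
  classical
  induction s using Finset.cons_induction with
  | empty => simpa using hf1
  | cons a s ha ih => rw [Finset.prod_cons, Finset.prod_cons, hfmul, ih]

lemma f_zero_of_dvd {f : ℕ → ℝ} (hfmul : ∀ m n : ℕ, f (m * n) = f m * f n)
    {p n : ℕ} (hpn : p ∣ n) (hfp : f p = 0) : f n = 0 := by
  obtain ⟨k, rfl⟩ := hpn
  rw [hfmul, hfp, zero_mul]

lemma pairwise_coprime_of_primes {A : Finset ℕ} (hA : ∀ p ∈ A, p.Prime) :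
    (A : Set ℕ).Pairwise (Function.onFun Nat.Coprime fun p => p) := by
  intro p hp q hq hne
  exact (Nat.coprime_primes (hA p hp) (hA q hq)).mpr hne

lemma squarefree_prod_primes {A : Finset ℕ} (hA : ∀ p ∈ A, p.Prime) :
    Squarefree (∏ p ∈ A, p) := by
  classical
  induction A using Finset.cons_induction with
  | empty => simpa using squarefree_one
  | cons a s ha ih =>
    rw [Finset.prod_cons]
    have hcop : Nat.Coprime a (∏ p ∈ s, p) := by
      apply Nat.Coprime.prod_right
      intro i hi
      exact (Nat.coprime_primes (hA a (Finset.mem_cons_self a s)) (hA i (Finset.mem_cons_of_mem hi))).mpr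
        (fun h => ha (h ▸ hi))
    exact (Nat.squarefree_mul hcop).mpr
      ⟨(hA a (Finset.mem_cons_self a s)).squarefree, ih (fun p hp => hA p (Finset.mem_cons_of_mem hp))⟩

lemma sigma0_prime {p : ℕ} (hp : p.Prime) : ArithmeticFunction.sigma 0 p = 2 := by
  rw [ArithmeticFunction.sigma_zero_apply, hp.divisors]
  rw [Finset.card_insert_of_notMem (by simp [hp.one_lt.ne]), Finset.card_singleton]

lemma sigma1_prime {p : ℕ} (hp : p.Prime) : ArithmeticFunction.sigma 1 p = 1 + p := by
  rw [ArithmeticFunction.sigma_one_apply, hp.divisors]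
  rw [Finset.sum_insert (by simp [hp.one_lt.ne]), Finset.sum_singleton]

lemma termA_eq {f : ℕ → ℝ} (hf1 : f 1 = 1) (hfmul : ∀ m n : ℕ, f (m * n) = f m * f n)
    {A : Finset ℕ} (hA : ∀ p ∈ A, p.Prime) :
    (ArithmeticFunction.moebius (∏ p ∈ A, p) : ℝ) ^ 2 * f (∏ p ∈ A, p) ^ 2 / hFun (∏ p ∈ A, p) =
      ∏ p ∈ A, aFn f p := by
  rw [ArithmeticFunction.IsMultiplicative.map_prod _ ArithmeticFunction.isMultiplicative_moebius A
    (pairwise_coprime_of_primes hA)]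
  rw [f_prod hf1 hfmul, hFun_eq, Nat.primeFactors_prod hA]
  push_cast
  rw [← Finset.prod_pow, ← Finset.prod_pow, ← Finset.prod_mul_distrib, ← Finset.prod_div_distrib]
  refine Finset.prod_congr rfl fun p hp => ?_
  rw [ArithmeticFunction.moebius_apply_prime (hA p hp), aFn]
  push_cast
  ring

lemma termB_eq {f : ℕ → ℝ} (hf1 : f 1 = 1) (hfmul : ∀ m n : ℕ, f (m * n) = f m * f n)
    {A : Finset ℕ} (hA : ∀ p ∈ A, p.Prime) :
    (ArithmeticFunction.moebius (∏ p ∈ A, p) : ℝ) * f (∏ p ∈ A, p) *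
        (ArithmeticFunction.sigma 0 (∏ p ∈ A, p) : ℝ) * Real.sqrt ((∏ p ∈ A, p : ℕ) : ℝ) /
      ((ArithmeticFunction.sigma 1 (∏ p ∈ A, p) : ℝ) * hFun (∏ p ∈ A, p)) =
      ∏ p ∈ A, bFn f p := by
  rw [ArithmeticFunction.IsMultiplicative.map_prod _ ArithmeticFunction.isMultiplicative_moebius A
    (pairwise_coprime_of_primes hA),
    ArithmeticFunction.IsMultiplicative.map_prod _ ArithmeticFunction.isMultiplicative_sigma A
    (pairwise_coprime_of_primes hA),
    ArithmeticFunction.IsMultiplicative.map_prod _ ArithmeticFunction.isMultiplicative_sigma A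
    (pairwise_coprime_of_primes hA)]
  rw [f_prod hf1 hfmul, hFun_eq, Nat.primeFactors_prod hA,
    show ((∏ p ∈ A, p : ℕ) : ℝ) = ∏ p ∈ A, (p : ℝ) by push_cast; rfl,
    sqrt_prod' _ _ (fun i _ => by positivity)]
  push_cast
  rw [← Finset.prod_mul_distrib, ← Finset.prod_mul_distrib, ← Finset.prod_mul_distrib,
    ← Finset.prod_mul_distrib, ← Finset.prod_div_distrib]
  refine Finset.prod_congr rfl fun p hp => ?_
  rw [ArithmeticFunction.moebius_apply_prime (hA p hp), sigma0_prime (hA p hp),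
    sigma1_prime (hA p hp), bFn]
  push_cast
  ring

lemma factorization_tuple {t : ℕ} (v : Fin t → ℕ) (hv : ∀ i, (v i).Prime) (p : ℕ) :
    (∏ i, v i).factorization p = (Finset.univ.filter fun i => v i = p).card := by
  classical
  rw [Nat.factorization_prod (fun i _ => (hv i).ne_zero), Finsupp.finset_sum_apply,
    Finset.card_filter]
  refine Finset.sum_congr rfl fun i _ => ?_
  rw [(hv i).factorization, Finsupp.single_apply]

lemma primeFactors_tuple {t : ℕ} (v : Fin t → ℕ) (hv : ∀ i, (v i).Prime) :
    (∏ i, v i).primeFactors = Finset.image v Finset.univ := by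
  classical
  have hne : (∏ i, v i) ≠ 0 := Finset.prod_ne_zero_iff.mpr fun i _ => (hv i).ne_zero
  ext p
  simp only [Nat.mem_primeFactors, Finset.mem_image, Finset.mem_univ, true_and]
  constructor
  · rintro ⟨hp, hdvd, -⟩
    obtain ⟨i, -, hi⟩ := hp.prime.exists_mem_finset_dvd hdvd
    exact ⟨i, ((Nat.prime_dvd_prime_iff_eq hp (hv i)).mp hi).symm⟩
  · rintro ⟨i, rfl⟩
    exact ⟨hv i, Finset.dvd_prod_of_mem v (Finset.mem_univ i), hne⟩

lemma Hfun_tuple_eq {f : ℕ → ℝ} {t : ℕ} (v : Fin t → ℕ) (hv : ∀ i, (v i).Prime) :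
    Hfun f (∏ i, v i) = ∏ p ∈ Finset.image v Finset.univ,
      (-4 * Real.log p ^ ((Finset.univ.filter fun i => v i = p).card) * f p * Real.sqrt p /
        (hFun p * ((p : ℝ) + 1) * Ffac f p)) := by
  classical
  rw [Hfun, Finsupp.prod, Nat.support_factorization, primeFactors_tuple v hv]
  exact Finset.prod_congr rfl fun p _ => by rw [factorization_tuple v hv]

lemma Hfun_tuple_zero {f : ℕ → ℝ} {t : ℕ} (v : Fin t → ℕ) (hv : ∀ i, (v i).Prime)
    {i₀ : Fin t} (hz : f (v i₀) = 0) : Hfun f (∏ i, v i) = 0 := by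
  classical
  rw [Hfun_tuple_eq v hv]
  exact Finset.prod_eq_zero (Finset.mem_image_of_mem v (Finset.mem_univ i₀)) (by simp [hz])

lemma Hfun_tuple_val {f : ℕ → ℝ} {t : ℕ} (v : Fin t → ℕ) (hv : ∀ i, (v i).Prime) :
    Hfun f (∏ i, v i) = (∏ i, Real.log (v i)) *
      ∏ p ∈ Finset.image v Finset.univ,
        (-4 * f p * Real.sqrt p / (hFun p * ((p : ℝ) + 1) * Ffac f p)) := by
  classical
  rw [Hfun_tuple_eq v hv,
    show (∏ i, Real.log (v i : ℕ)) = ∏ p ∈ Finset.image v Finset.univ,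
      (Real.log p) ^ ((Finset.univ.filter fun i => v i = p).card) from
        Finset.prod_comp (fun n : ℕ => Real.log n) v,
    ← Finset.prod_mul_distrib]
  exact Finset.prod_congr rfl fun p _ => by ring

lemma coprime_prod_prod {A B : Finset ℕ} (hA : ∀ p ∈ A, p.Prime) (hB : ∀ p ∈ B, p.Prime)
    (hd : Disjoint A B) : Nat.Coprime (∏ p ∈ A, p) (∏ p ∈ B, p) := by
  have hA0 : (∏ p ∈ A, p) ≠ 0 := Finset.prod_ne_zero_iff.mpr fun p hp => (hA p hp).pos.ne'
  have hB0 : (∏ p ∈ B, p) ≠ 0 := Finset.prod_ne_zero_iff.mpr fun p hp => (hB p hp).pos.ne'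
  exact (Nat.disjoint_primeFactors hA0 hB0).mp
    (by rwa [Nat.primeFactors_prod hA, Nat.primeFactors_prod hB])


/-- Let `f` be a completely multiplicative real-valued function which is nonzero at only
finitely many primes and let `t ≥ 1`. Then
`∑_{(a,r,s) pairwise coprime} [μ(a)²f(a)²/h(a)]·[μ(r)f(r)τ(r)√r/(σ(r)h(r))]·
[μ(s)f(s)τ(s)√s/(σ(s)h(s))]·(log rs)^t = (∑_{ℓ₁,…,ℓ_t primes} H(ℓ₁⋯ℓ_t))·∏_p F(p)`. -/
theorem statement9 (f : ℕ → ℝ) (hf1 : f 1 = 1) (hfmul : ∀ m n : ℕ, f (m * n) = f m * f n)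
    (hfin : {p : ℕ | p.Prime ∧ f p ≠ 0}.Finite) (t : ℕ) (ht : 1 ≤ t) :
    ∑' x : {x : ℕ × ℕ × ℕ // 0 < x.1 ∧ 0 < x.2.1 ∧ 0 < x.2.2 ∧
        Nat.Coprime x.1 x.2.1 ∧ Nat.Coprime x.1 x.2.2 ∧ Nat.Coprime x.2.1 x.2.2},
      ((ArithmeticFunction.moebius x.1.1 : ℝ) ^ 2 * f x.1.1 ^ 2 / hFun x.1.1) *
        ((ArithmeticFunction.moebius x.1.2.1 : ℝ) * f x.1.2.1 *
            (ArithmeticFunction.sigma 0 x.1.2.1 : ℝ) * Real.sqrt x.1.2.1 /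
          ((ArithmeticFunction.sigma 1 x.1.2.1 : ℝ) * hFun x.1.2.1)) *
        ((ArithmeticFunction.moebius x.1.2.2 : ℝ) * f x.1.2.2 *
            (ArithmeticFunction.sigma 0 x.1.2.2 : ℝ) * Real.sqrt x.1.2.2 /
          ((ArithmeticFunction.sigma 1 x.1.2.2 : ℝ) * hFun x.1.2.2)) *
        Real.log (x.1.2.1 * x.1.2.2) ^ t =
      (∑' v : Fin t → Nat.Primes, Hfun f (∏ i, (v i : ℕ))) * ∏' p : Nat.Primes, Ffac f p := by
  classical
  set S : Finset ℕ := hfin.toFinset with hSdef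
  have hSmem : ∀ p : ℕ, p ∈ S ↔ p.Prime ∧ f p ≠ 0 := fun p => hfin.mem_toFinset
  have hSprime : ∀ p ∈ S, p.Prime := fun p hp => ((hSmem p).mp hp).1
  set M : ℝ := ∑ v ∈ Fintype.piFinset (fun _ : Fin t => S),
      (∏ i, Real.log (v i)) * ((∏ p ∈ Finset.image v Finset.univ, (2 * bFn f p)) *
        ∏ p ∈ S \ Finset.image v Finset.univ, Ffac f p) with hMdef
  have keyR : (∑' v : Fin t → Nat.Primes, Hfun f (∏ i, (v i : ℕ))) *
      (∏' p : Nat.Primes, Ffac f p) = M := by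
    -- the product over all primes is the product over S
    have hprod : (∏' p : Nat.Primes, Ffac f p) = ∏ p ∈ S, Ffac f p := by
      refine Eq.trans (tprod_eq_prod (L := SummationFilter.unconditional _) (s := Finset.subtype Nat.Prime S) ?_) ?_
      · intro q hq
        rw [Finset.mem_subtype] at hq
        have hfq : f q = 0 := by
          by_contra hfq
          exact hq ((hSmem q).mpr ⟨q.2, hfq⟩)
        simp [Ffac, hfq]
      · rw [Finset.prod_subtype_eq_prod_filter, Finset.filter_true_of_mem hSprime]
    have hsum : (∑' v : Fin t → Nat.Primes, Hfun f (∏ i, (v i : ℕ))) =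
        ∑ v ∈ Fintype.piFinset (fun _ : Fin t => S),
          ((∏ i, Real.log (v i)) * ∏ p ∈ Finset.image v Finset.univ,
            (-4 * f p * Real.sqrt p / (hFun p * ((p : ℝ) + 1) * Ffac f p))) := by
      refine Eq.trans (tsum_eq_sum (L := SummationFilter.unconditional _)
          (s := Fintype.piFinset fun _ : Fin t => Finset.subtype Nat.Prime S) ?_) ?_
      case _ =>
        intro v hv
        rw [Fintype.mem_piFinset] at hv
        push_neg at hv
        obtain ⟨k, hk⟩ := hv
        rw [Finset.mem_subtype] at hk
        have hfz : f (v k) = 0 := by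
          by_contra hfz
          exact hk ((hSmem _).mpr ⟨(v k).2, hfz⟩)
        exact Hfun_tuple_zero _ (fun i => (v i).2) hfz
      · refine Finset.sum_nbij' (i := fun w k => ((w k : Nat.Primes) : ℕ))
          (j := fun v k => if h : (v k).Prime then (⟨v k, h⟩ : Nat.Primes) else ⟨2, Nat.prime_two⟩)
          ?_ ?_ ?_ ?_ ?_
        · intro w hw
          rw [Fintype.mem_piFinset] at hw ⊢
          intro k
          have := hw k
          rwa [Finset.mem_subtype] at this
        · intro v hv
          rw [Fintype.mem_piFinset] at hv ⊢
          intro k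
          have hk := hv k
          rw [Finset.mem_subtype]
          simp only [hSprime _ hk, dif_pos]
          exact hk
        · intro w hw
          funext k
          simp only [(w k).2, dif_pos]
        · intro v hv
          rw [Fintype.mem_piFinset] at hv
          funext k
          simp only [hSprime _ (hv k), dif_pos]
        · intro w hw
          rw [Fintype.mem_piFinset] at hw
          have hprime : ∀ k, ((w k : Nat.Primes) : ℕ).Prime := fun k => (w k).2
          exact Hfun_tuple_val _ hprime
    rw [hprod, hsum, Finset.sum_mul, hMdef]
    refine Finset.sum_congr rfl fun v hv => ?_
    rw [Fintype.mem_piFinset] at hv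
    have hU : Finset.image v Finset.univ ⊆ S := by
      intro p hp
      obtain ⟨i, -, rfl⟩ := Finset.mem_image.mp hp
      exact hv i
    have hF : ∀ p ∈ Finset.image v Finset.univ,
        (-4 * f p * Real.sqrt p / (hFun p * ((p : ℝ) + 1) * Ffac f p)) =
          2 * bFn f p / Ffac f p := by
      intro p hp
      have h1 := (Ffac_pos (f := f) (hSprime _ (hU hp))).ne'
      have h2 := (lt_trans one_pos (one_lt_hterm (hSprime _ (hU hp)))).ne'
      have h3 : ((p:ℝ) + 1) ≠ 0 := by positivity
      rw [bFn, hFun_prime (hSprime _ (hU hp))]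
      field_simp
      ring
    rw [Finset.prod_congr rfl hF, ← Finset.prod_sdiff hU (f := Ffac f), Finset.prod_div_distrib]
    have hFne : (∏ p ∈ Finset.image v Finset.univ, Ffac f p) ≠ 0 :=
      Finset.prod_ne_zero_iff.mpr fun p hp => (Ffac_pos (hSprime _ (hU hp))).ne'
    field_simp
  rw [keyR]
  -- Left-hand side computation
  set E : Finset ℕ := S.powerset.image (fun A => ∏ p ∈ A, p) with hEdef
  have hzero : ∀ m : ℕ, m ∉ E → (ArithmeticFunction.moebius m : ℝ) = 0 ∨ f m = 0 := by
    intro m hm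
    by_cases hsq : Squarefree m
    · right
      by_contra hf0
      apply hm
      refine Finset.mem_image.mpr ⟨m.primeFactors, Finset.mem_powerset.mpr ?_,
        Nat.prod_primeFactors_of_squarefree hsq⟩
      intro p hp
      exact (hSmem p).mpr ⟨Nat.prime_of_mem_primeFactors hp,
        fun hfp => hf0 (f_zero_of_dvd hfmul (Nat.dvd_of_mem_primeFactors hp) hfp)⟩
    · left
      exact_mod_cast congrArg (Int.cast : ℤ → ℝ)
        (ArithmeticFunction.moebius_eq_zero_of_not_squarefree hsq)
  have hEsq : ∀ m ∈ E, Squarefree m ∧ m.primeFactors ⊆ S := by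
    intro m hm
    obtain ⟨A, hA, rfl⟩ := Finset.mem_image.mp hm
    have hA' : ∀ p ∈ A, p.Prime := fun p hp => hSprime p (Finset.mem_powerset.mp hA hp)
    exact ⟨squarefree_prod_primes hA', by
      rw [Nat.primeFactors_prod hA']; exact Finset.mem_powerset.mp hA⟩
  refine Eq.trans (tsum_eq_sum (s := Finset.subtype _ (E ×ˢ E ×ˢ E)) ?_) ?_
  case _ =>
    intro x hx
    rw [Finset.mem_subtype] at hx
    by_cases ha : x.val.1 ∈ E
    · by_cases hr : x.val.2.1 ∈ E
      · by_cases hs : x.val.2.2 ∈ E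
        · exact absurd (Finset.mem_product.mpr ⟨ha, Finset.mem_product.mpr ⟨hr, hs⟩⟩) hx
        · rcases hzero _ hs with h0 | h0 <;> simp [h0]
      · rcases hzero _ hr with h0 | h0 <;> simp [h0]
    · rcases hzero _ ha with h0 | h0 <;> simp [h0]
  -- reindex by triples of disjoint subsets of S
  refine Eq.trans (Finset.sum_nbij'
    (i := fun x => (⟨(↑x : ℕ × ℕ × ℕ).2.1.primeFactors ∪ (↑x : ℕ × ℕ × ℕ).2.2.primeFactors,
        ((↑x : ℕ × ℕ × ℕ).2.1.primeFactors, (↑x : ℕ × ℕ × ℕ).1.primeFactors)⟩ :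
        (_ : Finset ℕ) × Finset ℕ × Finset ℕ))
    (j := fun z => if h : 0 < (∏ p ∈ z.2.2, p) ∧ 0 < (∏ p ∈ z.2.1, p) ∧
          0 < (∏ p ∈ z.1 \ z.2.1, p) ∧
          Nat.Coprime (∏ p ∈ z.2.2, p) (∏ p ∈ z.2.1, p) ∧
          Nat.Coprime (∏ p ∈ z.2.2, p) (∏ p ∈ z.1 \ z.2.1, p) ∧
          Nat.Coprime (∏ p ∈ z.2.1, p) (∏ p ∈ z.1 \ z.2.1, p) then
        ⟨(∏ p ∈ z.2.2, p, ∏ p ∈ z.2.1, p, ∏ p ∈ z.1 \ z.2.1, p), h⟩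
      else ⟨(1, 1, 1), one_pos, one_pos, one_pos, Nat.coprime_one_left _,
        Nat.coprime_one_left _, Nat.coprime_one_left _⟩)
    (t := S.powerset.sigma (fun T => T.powerset ×ˢ (S \ T).powerset))
    (g := fun z => (∏ p ∈ z.2.2, aFn f p) * (∏ p ∈ z.2.1, bFn f p) *
      (∏ p ∈ z.1 \ z.2.1, bFn f p) * (∑ p ∈ z.1, Real.log p) ^ t)
    ?_ ?_ ?_ ?_ ?_) ?_
  case _ => -- membership forward
    intro x hx
    rw [Finset.mem_subtype, Finset.mem_product, Finset.mem_product] at hx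
    obtain ⟨⟨hasq, haS⟩, ⟨hrsq, hrS⟩, ⟨hssq, hsS⟩⟩ :=
      And.intro (hEsq _ hx.1) (And.intro (hEsq _ hx.2.1) (hEsq _ hx.2.2))
    obtain ⟨-, -, -, car, cas, crs⟩ := x.2
    rw [Finset.mem_sigma, Finset.mem_powerset, Finset.mem_product, Finset.mem_powerset,
      Finset.mem_powerset]
    refine ⟨Finset.union_subset hrS hsS, Finset.subset_union_left, ?_⟩
    rw [Finset.subset_sdiff]
    exact ⟨haS, Finset.disjoint_union_right.mpr
      ⟨car.disjoint_primeFactors, cas.disjoint_primeFactors⟩⟩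
  case _ => -- membership backward
    intro z hz
    rw [Finset.mem_sigma, Finset.mem_powerset, Finset.mem_product, Finset.mem_powerset,
      Finset.mem_powerset] at hz
    obtain ⟨hTS, hRT, hAST⟩ := hz
    have hT' : ∀ p ∈ z.1, p.Prime := fun p hp => hSprime p (hTS hp)
    have hR' : ∀ p ∈ z.2.1, p.Prime := fun p hp => hT' p (hRT hp)
    have hA' : ∀ p ∈ z.2.2, p.Prime := fun p hp => hSprime p (Finset.sdiff_subset (hAST hp))
    have hTR' : ∀ p ∈ z.1 \ z.2.1, p.Prime := fun p hp => hT' p (Finset.sdiff_subset hp)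
    have hdAR : Disjoint z.2.2 z.2.1 :=
      Finset.disjoint_of_subset_left hAST (Finset.disjoint_of_subset_right hRT
        Finset.sdiff_disjoint)
    have hdATR : Disjoint z.2.2 (z.1 \ z.2.1) :=
      Finset.disjoint_of_subset_left hAST (Finset.disjoint_of_subset_right
        Finset.sdiff_subset Finset.sdiff_disjoint)
    have hdRTR : Disjoint z.2.1 (z.1 \ z.2.1) := Finset.disjoint_sdiff
    have hP : 0 < (∏ p ∈ z.2.2, p) ∧ 0 < (∏ p ∈ z.2.1, p) ∧ 0 < (∏ p ∈ z.1 \ z.2.1, p) ∧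
        Nat.Coprime (∏ p ∈ z.2.2, p) (∏ p ∈ z.2.1, p) ∧
        Nat.Coprime (∏ p ∈ z.2.2, p) (∏ p ∈ z.1 \ z.2.1, p) ∧
        Nat.Coprime (∏ p ∈ z.2.1, p) (∏ p ∈ z.1 \ z.2.1, p) :=
      ⟨Finset.prod_pos (fun p hp => (hA' p hp).pos),
        Finset.prod_pos (fun p hp => (hR' p hp).pos),
        Finset.prod_pos (fun p hp => (hTR' p hp).pos),
        coprime_prod_prod hA' hR' hdAR, coprime_prod_prod hA' hTR' hdATR,
        coprime_prod_prod hR' hTR' hdRTR⟩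
    rw [dif_pos hP, Finset.mem_subtype, Finset.mem_product, Finset.mem_product]
    have hmemE : ∀ B : Finset ℕ, B ⊆ S → (∏ p ∈ B, p) ∈ E :=
      fun B hB => Finset.mem_image.mpr ⟨B, Finset.mem_powerset.mpr hB, rfl⟩
    exact ⟨hmemE _ (fun p hp => Finset.sdiff_subset (hAST hp)),
      hmemE _ (fun p hp => hTS (hRT hp)), hmemE _ (fun p hp => hTS (Finset.sdiff_subset hp))⟩
  case _ => -- left inverse
    intro x hx
    rw [Finset.mem_subtype, Finset.mem_product, Finset.mem_product] at hx
    obtain ⟨⟨hasq, haS⟩, ⟨hrsq, hrS⟩, ⟨hssq, hsS⟩⟩ :=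
      And.intro (hEsq _ hx.1) (And.intro (hEsq _ hx.2.1) (hEsq _ hx.2.2))
    obtain ⟨-, -, -, car, cas, crs⟩ := x.2
    have hds : Disjoint (↑x : ℕ × ℕ × ℕ).2.1.primeFactors (↑x : ℕ × ℕ × ℕ).2.2.primeFactors :=
      crs.disjoint_primeFactors
    have hval : ((∏ p ∈ (↑x : ℕ × ℕ × ℕ).1.primeFactors, p,
        ∏ p ∈ (↑x : ℕ × ℕ × ℕ).2.1.primeFactors, p,
        ∏ p ∈ ((↑x : ℕ × ℕ × ℕ).2.1.primeFactors ∪ (↑x : ℕ × ℕ × ℕ).2.2.primeFactors) \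
          (↑x : ℕ × ℕ × ℕ).2.1.primeFactors, p) : ℕ × ℕ × ℕ) = ↑x := by
      rw [Finset.union_sdiff_cancel_left hds, Nat.prod_primeFactors_of_squarefree hasq,
        Nat.prod_primeFactors_of_squarefree hrsq, Nat.prod_primeFactors_of_squarefree hssq]
    dsimp only
    split
    · exact Subtype.ext hval
    · next h =>
      refine absurd ?_ h
      rw [Finset.union_sdiff_cancel_left hds, Nat.prod_primeFactors_of_squarefree hasq,
        Nat.prod_primeFactors_of_squarefree hrsq, Nat.prod_primeFactors_of_squarefree hssq]
      exact x.2
  case _ => -- right inverse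
    intro z hz
    rw [Finset.mem_sigma, Finset.mem_powerset, Finset.mem_product, Finset.mem_powerset,
      Finset.mem_powerset] at hz
    obtain ⟨hTS, hRT, hAST⟩ := hz
    have hT' : ∀ p ∈ z.1, p.Prime := fun p hp => hSprime p (hTS hp)
    have hR' : ∀ p ∈ z.2.1, p.Prime := fun p hp => hT' p (hRT hp)
    have hA' : ∀ p ∈ z.2.2, p.Prime := fun p hp => hSprime p (Finset.sdiff_subset (hAST hp))
    have hTR' : ∀ p ∈ z.1 \ z.2.1, p.Prime := fun p hp => hT' p (Finset.sdiff_subset hp)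
    by_cases hP : 0 < (∏ p ∈ z.2.2, p) ∧ 0 < (∏ p ∈ z.2.1, p) ∧ 0 < (∏ p ∈ z.1 \ z.2.1, p) ∧
        Nat.Coprime (∏ p ∈ z.2.2, p) (∏ p ∈ z.2.1, p) ∧
        Nat.Coprime (∏ p ∈ z.2.2, p) (∏ p ∈ z.1 \ z.2.1, p) ∧
        Nat.Coprime (∏ p ∈ z.2.1, p) (∏ p ∈ z.1 \ z.2.1, p)
    · rw [dif_pos hP]
      dsimp only
      rw [Nat.primeFactors_prod hR', Nat.primeFactors_prod hTR', Nat.primeFactors_prod hA',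
        Finset.union_sdiff_of_subset hRT]
    · exfalso
      refine hP ⟨Finset.prod_pos (fun p hp => (hA' p hp).pos),
        Finset.prod_pos (fun p hp => (hR' p hp).pos),
        Finset.prod_pos (fun p hp => (hTR' p hp).pos), ?_, ?_, ?_⟩
      · exact coprime_prod_prod hA' hR' (Finset.disjoint_of_subset_left hAST
          (Finset.disjoint_of_subset_right hRT Finset.sdiff_disjoint))
      · exact coprime_prod_prod hA' hTR' (Finset.disjoint_of_subset_left hAST
          (Finset.disjoint_of_subset_right Finset.sdiff_subset Finset.sdiff_disjoint))
      · exact coprime_prod_prod hR' hTR' Finset.disjoint_sdiff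
  case _ => -- values agree
    intro x hx
    rw [Finset.mem_subtype, Finset.mem_product, Finset.mem_product] at hx
    obtain ⟨⟨hasq, haS⟩, ⟨hrsq, hrS⟩, ⟨hssq, hsS⟩⟩ :=
      And.intro (hEsq _ hx.1) (And.intro (hEsq _ hx.2.1) (hEsq _ hx.2.2))
    obtain ⟨hapos, hrpos, hspos, car, cas, crs⟩ := x.2
    have haP : ∀ p ∈ (↑x : ℕ × ℕ × ℕ).1.primeFactors, p.Prime :=
      fun p hp => Nat.prime_of_mem_primeFactors hp
    have hrP : ∀ p ∈ (↑x : ℕ × ℕ × ℕ).2.1.primeFactors, p.Prime :=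
      fun p hp => Nat.prime_of_mem_primeFactors hp
    have hsP : ∀ p ∈ (↑x : ℕ × ℕ × ℕ).2.2.primeFactors, p.Prime :=
      fun p hp => Nat.prime_of_mem_primeFactors hp
    have e1 := termA_eq hf1 hfmul haP
    have e2 := termB_eq hf1 hfmul hrP
    have e3 := termB_eq hf1 hfmul hsP
    rw [Nat.prod_primeFactors_of_squarefree hasq] at e1
    rw [Nat.prod_primeFactors_of_squarefree hrsq] at e2
    rw [Nat.prod_primeFactors_of_squarefree hssq] at e3
    have hds : Disjoint (↑x : ℕ × ℕ × ℕ).2.1.primeFactors (↑x : ℕ × ℕ × ℕ).2.2.primeFactors :=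
      crs.disjoint_primeFactors
    have elog : Real.log ((((↑x : ℕ × ℕ × ℕ).2.1 : ℕ) : ℝ) * (((↑x : ℕ × ℕ × ℕ).2.2 : ℕ) : ℝ)) =
        ∑ p ∈ (↑x : ℕ × ℕ × ℕ).2.1.primeFactors ∪ (↑x : ℕ × ℕ × ℕ).2.2.primeFactors,
          Real.log p := by
      rw [← Nat.cast_mul, show (↑x : ℕ × ℕ × ℕ).2.1 * (↑x : ℕ × ℕ × ℕ).2.2 =
          ∏ p ∈ (↑x : ℕ × ℕ × ℕ).2.1.primeFactors ∪ (↑x : ℕ × ℕ × ℕ).2.2.primeFactors, p from by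
        rw [Finset.prod_union hds, Nat.prod_primeFactors_of_squarefree hrsq,
          Nat.prod_primeFactors_of_squarefree hssq]]
      rw [Nat.cast_prod]
      exact Real.log_prod (fun p hp => by
        have hpp : p.Prime := by
          rcases Finset.mem_union.mp hp with h | h
          exacts [Nat.prime_of_mem_primeFactors h, Nat.prime_of_mem_primeFactors h]
        exact Nat.cast_ne_zero.mpr hpp.pos.ne')
    dsimp only
    rw [e1, e2, e3, elog, Finset.union_sdiff_cancel_left hds]
  -- now the combinatorial finite identity
  rw [Finset.sum_sigma]
  have hsumA : ∀ T : Finset ℕ, ∑ A ∈ (S \ T).powerset, ∏ p ∈ A, aFn f p =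
      ∏ p ∈ S \ T, (1 + aFn f p) := by
    intro T
    have h := Finset.prod_add (aFn f) (fun _ => (1:ℝ)) (S \ T)
    simp only [Finset.prod_const_one, mul_one] at h
    rw [← h]
    exact Finset.prod_congr rfl fun p _ => add_comm _ 1
  have hstep4 : ∀ T ∈ S.powerset, (∑ x ∈ T.powerset ×ˢ (S \ T).powerset,
      (∏ p ∈ x.2, aFn f p) * (∏ p ∈ x.1, bFn f p) * (∏ p ∈ T \ x.1, bFn f p) *
        (∑ p ∈ T, Real.log p) ^ t) =
      ((∏ p ∈ T, (2 * bFn f p)) * (∏ p ∈ S \ T, (1 + aFn f p))) *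
        (∑ p ∈ T, Real.log p) ^ t := by
    intro T _
    rw [Finset.sum_product]
    have inner : ∀ R : Finset ℕ, (∑ A ∈ (S \ T).powerset,
        (∏ p ∈ A, aFn f p) * (∏ p ∈ R, bFn f p) * (∏ p ∈ T \ R, bFn f p) *
          (∑ p ∈ T, Real.log p) ^ t) =
        ((∏ p ∈ R, bFn f p) * (∏ p ∈ T \ R, bFn f p)) *
          ((∏ p ∈ S \ T, (1 + aFn f p)) * (∑ p ∈ T, Real.log p) ^ t) := by
      intro R
      rw [← hsumA T, Finset.sum_mul, Finset.mul_sum]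
      exact Finset.sum_congr rfl fun A _ => by ring
    rw [Finset.sum_congr rfl fun R _ => inner R, ← Finset.sum_mul, ← Finset.prod_add]
    rw [show (∏ p ∈ T, (bFn f p + bFn f p)) = ∏ p ∈ T, (2 * bFn f p) from
      Finset.prod_congr rfl fun p _ => by ring]
    ring
  rw [Finset.sum_congr rfl hstep4]
  have hpow : ∀ T : Finset ℕ, (∑ p ∈ T, Real.log p) ^ t =
      ∑ w ∈ Fintype.piFinset (fun _ : Fin t => T), ∏ i, Real.log (w i) := by
    intro T
    rw [← Fin.prod_const t (∑ p ∈ T, Real.log (p : ℕ)), Finset.prod_univ_sum]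
  have hpiT : ∀ T ∈ S.powerset, Fintype.piFinset (fun _ : Fin t => T) =
      (Fintype.piFinset (fun _ : Fin t => S)).filter (fun w => ∀ i, w i ∈ T) := by
    intro T hT
    rw [Finset.mem_powerset] at hT
    ext w
    simp only [Fintype.mem_piFinset, Finset.mem_filter]
    exact ⟨fun h => ⟨fun i => hT (h i), h⟩, fun h => h.2⟩
  have hswap : ∀ T ∈ S.powerset, ((∏ p ∈ T, (2 * bFn f p)) * (∏ p ∈ S \ T, (1 + aFn f p))) *
      (∑ p ∈ T, Real.log p) ^ t =
      ∑ w ∈ Fintype.piFinset (fun _ : Fin t => S),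
        if (∀ i, w i ∈ T) then
          ((∏ p ∈ T, (2 * bFn f p)) * (∏ p ∈ S \ T, (1 + aFn f p))) * ∏ i, Real.log (w i)
        else 0 := by
    intro T hT
    rw [hpow T, hpiT T hT, Finset.mul_sum, ← Finset.sum_filter]
  rw [Finset.sum_congr rfl hswap, Finset.sum_comm, hMdef]
  refine Finset.sum_congr rfl fun w hw => ?_
  have hw' := Fintype.mem_piFinset.mp hw
  have hU : Finset.image w Finset.univ ⊆ S := Finset.image_subset_iff.mpr fun i _ => hw' i
  have key7 : (∑ T ∈ S.powerset.filter (fun T => Finset.image w Finset.univ ⊆ T),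
      (∏ p ∈ T, (2 * bFn f p)) * (∏ p ∈ S \ T, (1 + aFn f p))) =
      (∏ p ∈ Finset.image w Finset.univ, (2 * bFn f p)) *
        ∏ p ∈ S \ Finset.image w Finset.univ, Ffac f p := by
    refine Eq.trans (Finset.sum_nbij' (i := fun T => T \ Finset.image w Finset.univ)
      (j := fun T' => Finset.image w Finset.univ ∪ T')
      (t := (S \ Finset.image w Finset.univ).powerset)
      (g := fun T' => (∏ p ∈ Finset.image w Finset.univ, (2 * bFn f p)) *
        ((∏ p ∈ T', (2 * bFn f p)) *
          (∏ p ∈ (S \ Finset.image w Finset.univ) \ T', (1 + aFn f p))))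
      ?_ ?_ ?_ ?_ ?_) ?_
    · intro T hT
      rw [Finset.mem_filter, Finset.mem_powerset] at hT
      exact Finset.mem_powerset.mpr (Finset.sdiff_subset_sdiff hT.1 (subset_refl _))
    · intro T' hT'
      rw [Finset.mem_powerset] at hT'
      rw [Finset.mem_filter, Finset.mem_powerset]
      exact ⟨Finset.union_subset hU (hT'.trans Finset.sdiff_subset),
        Finset.subset_union_left⟩
    · intro T hT
      rw [Finset.mem_filter] at hT
      exact Finset.union_sdiff_of_subset hT.2
    · intro T' hT'
      rw [Finset.mem_powerset] at hT'
      exact Finset.union_sdiff_cancel_left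
        (Finset.disjoint_of_subset_right hT' Finset.disjoint_sdiff)
    · intro T hT
      rw [Finset.mem_filter, Finset.mem_powerset] at hT
      obtain ⟨hTS, hUT⟩ := hT
      have h1 : (∏ p ∈ T, (2 * bFn f p)) = (∏ p ∈ Finset.image w Finset.univ, (2 * bFn f p)) *
          ∏ p ∈ T \ Finset.image w Finset.univ, (2 * bFn f p) := by
        rw [← Finset.prod_union Finset.disjoint_sdiff, Finset.union_sdiff_of_subset hUT]
      have h2 : S \ T = (S \ Finset.image w Finset.univ) \
          (T \ Finset.image w Finset.univ) := by
        ext p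
        simp only [Finset.mem_sdiff]
        have := @hUT p
        tauto
      rw [h1, h2]
      ring
    · rw [← Finset.mul_sum]
      congr 1
      rw [← Finset.prod_add]
      refine Finset.prod_congr rfl fun p hp => ?_
      have hp' : p.Prime := hSprime p (Finset.sdiff_subset hp)
      rw [Ffac_eq hp']
      ring
  rw [← Finset.sum_filter, ← Finset.sum_mul]
  have hfil : S.powerset.filter (fun T => ∀ i, w i ∈ T) =
      S.powerset.filter (fun T => Finset.image w Finset.univ ⊆ T) := by
    refine Finset.filter_congr fun T _ => ?_
    rw [Finset.image_subset_iff]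
    simp
  rw [hfil, key7]
  ring
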